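/- arXiv:1207.4274 — 3 statements merged into one kernel-verified Lean document; each statement's English description precedes it below -/
import Mathlib

section
/- Let n ≥ 1 and let α ∈ ℝ with cos α ≠ 1. Let ε_2, …, ε_n be independent random variables, each uniformly distributed on {−1, +1}, and define the angles φ_1 = 0 and φ_s = α·(ε_2 + ⋯ + ε_s) for 2 ≤ s ≤ n. Define the squared chain length L_n² = (∑_{s=1}^n cos φ_s)² + (∑_{s=1}^n sin φ_s)². Then the expectation of L_n² equals n·(1 + cos α)/(1 − cos α) − 2 cos α · (1 − cosⁿ α)/(1 − cos α)². -/
/-!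
Expanding the square, `L_n² = ∑_{s,t} cos (φ_s - φ_t)`, and for `t ≤ s` the angle difference
`φ_s - φ_t = α (ε_{t+1} + ⋯ + ε_s)` is `α` times a sum of `s - t` independent signs. Its
characteristic function factorises, each factor being `E[exp (i α ε)] = cos α`, so
`E cos (φ_s - φ_t) = cos^{|s-t|} α`. Summing this geometric kernel over `1 ≤ s, t ≤ n` gives the
closed form.
-/

open MeasureTheory ProbabilityTheory Finset
open scoped ENNReal NNReal

lemma sum_range_pow_dist_self (c : ℝ) (n : ℕ) :
    ∑ t ∈ range n, c ^ Nat.dist n t = c * ∑ k ∈ range n, c ^ k := by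
  rw [mul_sum, ← sum_range_reflect (fun k => c * c ^ k)]
  refine sum_congr rfl fun t ht => ?_
  have ht := mem_range.1 ht
  rw [← pow_succ', Nat.dist_comm, Nat.dist_eq_sub_of_le ht.le]
  congr 1
  omega

lemma sq_sub_mul_sum_range_sum_range_pow_dist (c : ℝ) (n : ℕ) :
    (1 - c) ^ 2 * ∑ s ∈ range n, ∑ t ∈ range n, c ^ Nat.dist s t
      = n * (1 + c) * (1 - c) - 2 * c * (1 - c ^ n) := by
  induction n with
  | zero => simp
  | succ n ih =>
    have hcol : ∑ s ∈ range n, c ^ Nat.dist s n = ∑ t ∈ range n, c ^ Nat.dist n t := by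
      simp only [Nat.dist_comm]
    simp only [sum_range_succ, sum_add_distrib, Nat.dist_self, pow_zero, hcol,
      sum_range_pow_dist_self]
    push_cast
    linear_combination ih + 2 * c * (1 - c) * mul_neg_geom_sum c n

lemma sum_Icc_sum_Icc_pow_dist {c : ℝ} (hc : c ≠ 1) (n : ℕ) :
    ∑ s ∈ Icc 1 n, ∑ t ∈ Icc 1 n, c ^ Nat.dist s t
      = n * (1 + c) / (1 - c) - 2 * c * (1 - c ^ n) / (1 - c) ^ 2 := by
  have hc' : 1 - c ≠ 0 := sub_ne_zero.2 hc.symm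
  have hshift : ∀ f : ℕ → ℝ, ∑ s ∈ Icc 1 n, f s = ∑ s ∈ range n, f (1 + s) := fun f => by
    rw [← Ico_add_one_right_eq_Icc, sum_Ico_eq_sum_range, Nat.add_sub_cancel]
  simp only [hshift, Nat.dist_add_add_left]
  field_simp
  linear_combination sq_sub_mul_sum_range_sum_range_pow_dist c n

lemma sq_sum_cos_add_sq_sum_sin {κ : Type*} (s : Finset κ) (a : κ → ℝ) :
    (∑ i ∈ s, Real.cos (a i)) ^ 2 + (∑ i ∈ s, Real.sin (a i)) ^ 2
      = ∑ i ∈ s, ∑ j ∈ s, Real.cos (a i - a j) := by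
  simp only [sq, sum_mul_sum, ← sum_add_distrib, Real.cos_sub]

lemma sum_Icc_two_sub_sum_Icc_two {M : Type*} [AddCommGroup M] (f : ℕ → M) {s t : ℕ}
    (ht : 1 ≤ t) (hts : t ≤ s) :
    ∑ j ∈ Icc 2 s, f j - ∑ j ∈ Icc 2 t, f j = ∑ j ∈ Ioc t s, f j := by
  have hIcc : ∀ m, Icc 2 m = Ioc 1 m := Icc_add_one_left_eq_Ioc 1
  rw [sub_eq_iff_eq_add', hIcc, hIcc, sum_Ioc_consecutive f ht hts]

section Characteristic

open Complex

lemma integral_half_dirac_add_half_dirac {X E : Type*} [MeasurableSpace X]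
    [MeasurableSingletonClass X] [NormedAddCommGroup E] [NormedSpace ℝ E] [CompleteSpace E]
    (f : X → E) (x y : X) :
    ∫ z, f z ∂((1 / 2 : ℝ≥0∞) • Measure.dirac x + (1 / 2 : ℝ≥0∞) • Measure.dirac y)
      = (1 / 2 : ℝ) • (f x + f y) := by
  have hint : ∀ a, Integrable f ((1 / 2 : ℝ≥0∞) • Measure.dirac a) := fun a =>
    (integrable_dirac (by simp)).smul_measure (by simp)
  rw [integral_add_measure (hint x) (hint y), integral_smul_measure, integral_smul_measure,
    integral_dirac, integral_dirac, smul_add]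
  simp

lemma integral_cexp_mul_I_half_dirac_neg_one_add_half_dirac_one (t : ℝ) :
    ∫ x : ℝ, cexp (t * x * I) ∂((1 / 2 : ℝ≥0∞) • Measure.dirac (-1 : ℝ)
      + (1 / 2 : ℝ≥0∞) • Measure.dirac 1) = Real.cos t := by
  rw [integral_half_dirac_add_half_dirac, ofReal_cos, cos, real_smul]
  push_cast
  ring_nf

variable {Ω ι : Type*} [MeasurableSpace Ω] {P : Measure Ω} {X : ι → Ω → ℝ} {S s : Finset ι}

lemma integral_cexp_mul_sum_eq_prod (hX : iIndepFun (fun i : S => X i) P)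
    (mX : ∀ i, Measurable (X i)) (hs : s ⊆ S) (t : ℝ) :
    ∫ ω, cexp (t * (∑ i ∈ s, X i ω) * I) ∂P = ∏ i ∈ s, ∫ ω, cexp (t * X i ω * I) ∂P := by
  have hXs : iIndepFun (fun i : s => X i) P :=
    hX.precomp (g := fun i : s => ⟨i, hs i.2⟩) fun _ _ h => Subtype.ext (Subtype.mk.inj h)
  have := hXs.integral_fun_prod_comp (X := fun i : s => X i) (f := fun _ x => cexp (t * x * I))
    (fun i => (mX i).aemeasurable) (fun i => by fun_prop)
  rw [← prod_coe_sort s, ← this]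
  simp only [← sum_coe_sort s, ofReal_sum, mul_sum, sum_mul, exp_sum]

lemma integral_cos_mul_sum_of_rademacher (hX : iIndepFun (fun i : S => X i) P)
    (mX : ∀ i, Measurable (X i))
    (hlaw : ∀ i ∈ S, P.map (X i) = ((1 : ℝ≥0∞) / 2) • Measure.dirac (-1 : ℝ)
      + ((1 : ℝ≥0∞) / 2) • Measure.dirac (1 : ℝ))
    (hs : s ⊆ S) (t : ℝ) :
    ∫ ω, Real.cos (t * ∑ i ∈ s, X i ω) ∂P = Real.cos t ^ #s := by
  have := hX.isProbabilityMeasure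
  have hfactor : ∀ i ∈ s, ∫ ω, cexp (t * X i ω * I) ∂P = Real.cos t := fun i hi => by
    rw [← integral_map (f := fun x : ℝ => cexp (t * x * I)) (mX i).aemeasurable (by fun_prop),
      hlaw i (hs hi), integral_cexp_mul_I_half_dirac_neg_one_add_half_dirac_one]
  have hint : Integrable (fun ω => cexp (t * (∑ i ∈ s, X i ω) * I)) P :=
    .of_bound (by fun_prop) 1 (ae_of_all _ fun ω => by
      rw [← ofReal_mul, norm_exp_ofReal_mul_I])
  calc ∫ ω, Real.cos (t * ∑ i ∈ s, X i ω) ∂P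
      = ∫ ω, (cexp (t * (∑ i ∈ s, X i ω) * I)).re ∂P := by
        simp_rw [← ofReal_mul, exp_ofReal_mul_I_re]
    _ = (∫ ω, cexp (t * (∑ i ∈ s, X i ω) * I) ∂P).re := integral_re hint
    _ = Real.cos t ^ #s := by
        rw [integral_cexp_mul_sum_eq_prod hX mX hs, prod_congr rfl hfactor, prod_const,
          ← ofReal_pow, ofReal_re]

end Characteristic

lemma integral_cos_sub_chain_angle {Ω : Type*} [MeasurableSpace Ω] {P : Measure Ω} {n : ℕ}
    {ε : ℕ → Ω → ℝ} (hmeas : ∀ i, Measurable (ε i))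
    (hindep : iIndepFun (fun i : (Icc 2 n : Finset ℕ) => ε i) P)
    (hlaw : ∀ i ∈ Icc 2 n, P.map (ε i) = ((1 : ℝ≥0∞) / 2) • Measure.dirac (-1 : ℝ)
      + ((1 : ℝ≥0∞) / 2) • Measure.dirac (1 : ℝ))
    (α : ℝ) {s t : ℕ} (hs : s ∈ Icc 1 n) (ht : t ∈ Icc 1 n) :
    ∫ ω, Real.cos (α * ∑ j ∈ Icc 2 s, ε j ω - α * ∑ j ∈ Icc 2 t, ε j ω) ∂P
      = Real.cos α ^ Nat.dist s t := by
  wlog hts : t ≤ s generalizing s t with H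
  · rw [Nat.dist_comm, ← H ht hs (le_of_not_ge hts)]
    exact integral_congr_ae (ae_of_all _ fun ω => by dsimp only; rw [← Real.cos_neg, neg_sub])
  rw [mem_Icc] at hs ht
  simp_rw [← mul_sub, sum_Icc_two_sub_sum_Icc_two _ ht.1 hts]
  rw [integral_cos_mul_sum_of_rademacher hindep hmeas hlaw (fun j hj => by
      rw [mem_Ioc] at hj; rw [mem_Icc]; omega), Nat.card_Ioc, Nat.dist_comm,
    Nat.dist_eq_sub_of_le hts]

theorem expected_sq_chain_length_general
    {Ω : Type*} [MeasurableSpace Ω] (P : Measure Ω) [IsProbabilityMeasure P]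
    (n : ℕ) (α : ℝ) (hα : Real.cos α ≠ 1)
    (ε : ℕ → Ω → ℝ) (hmeas : ∀ i, Measurable (ε i))
    (hindep : iIndepFun
      (fun i : (Finset.Icc 2 n : Finset ℕ) => ε i) P)
    (hlaw : ∀ i ∈ Finset.Icc 2 n,
      P.map (ε i) = ((1 : ℝ≥0∞)/2) • Measure.dirac (-1 : ℝ)
                  + ((1 : ℝ≥0∞)/2) • Measure.dirac (1 : ℝ)) :
    ∫ ω, ((∑ s ∈ Finset.Icc 1 n, Real.cos (α * ∑ j ∈ Finset.Icc 2 s, ε j ω)) ^ 2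
        + (∑ s ∈ Finset.Icc 1 n, Real.sin (α * ∑ j ∈ Finset.Icc 2 s, ε j ω)) ^ 2) ∂P
      = n * (1 + Real.cos α) / (1 - Real.cos α)
        - 2 * Real.cos α * (1 - (Real.cos α) ^ n) / (1 - Real.cos α) ^ 2 := by
  have hint : ∀ s t : ℕ, Integrable (fun ω => Real.cos
      (α * ∑ j ∈ Icc 2 s, ε j ω - α * ∑ j ∈ Icc 2 t, ε j ω)) P := fun s t =>
    .of_bound (by fun_prop) 1 (ae_of_all _ fun ω => by simpa using Real.abs_cos_le_one _)
  simp_rw [sq_sum_cos_add_sq_sum_sin]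
  rw [integral_finsetSum _ fun s _ => integrable_finsetSum _ fun t _ => hint s t]
  simp_rw [integral_finsetSum _ fun t _ => hint _ t]
  rw [← sum_Icc_sum_Icc_pow_dist hα n]
  exact sum_congr rfl fun s hs => sum_congr rfl fun t ht =>
    integral_cos_sub_chain_angle hmeas hindep hlaw α hs ht

/-- **Expected squared length of Feller's random chain.**
A planar chain of `n` unit links: the first link has direction angle `0`, and
each subsequent link turns by `±α` independently with probability `1/2`.
With `φ_s = α (ε_2 + ⋯ + ε_s)` the direction of the `s`-th link, the expected
squared end-to-end distance equals
`n (1 + cos α)/(1 - cos α) - 2 cos α (1 - cosⁿ α)/(1 - cos α)²`. -/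
theorem expected_sq_chain_length
    {Ω : Type*} [MeasurableSpace Ω] (P : Measure Ω) [IsProbabilityMeasure P]
    (n : ℕ) (hn : 1 ≤ n) (α : ℝ) (hα : Real.cos α ≠ 1)
    (ε : ℕ → Ω → ℝ) (hmeas : ∀ i, Measurable (ε i))
    (hindep : iIndepFun
      (fun i : (Finset.Icc 2 n : Finset ℕ) => ε i) P)
    (hlaw : ∀ i ∈ Finset.Icc 2 n,
      P.map (ε i) = ((1 : ℝ≥0∞)/2) • Measure.dirac (-1 : ℝ)
                  + ((1 : ℝ≥0∞)/2) • Measure.dirac (1 : ℝ)) :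
    ∫ ω, ((∑ s ∈ Finset.Icc 1 n, Real.cos (α * ∑ j ∈ Finset.Icc 2 s, ε j ω)) ^ 2
        + (∑ s ∈ Finset.Icc 1 n, Real.sin (α * ∑ j ∈ Finset.Icc 2 s, ε j ω)) ^ 2) ∂P
      = n * (1 + Real.cos α) / (1 - Real.cos α)
        - 2 * Real.cos α * (1 - (Real.cos α) ^ n) / (1 - Real.cos α) ^ 2 :=
  expected_sq_chain_length_general P n α hα ε hmeas hindep hlaw
end

section
/- Let a < b, T > 0, t ∈ [0, T], and let σ : [a, b] × [0, T] → ℝ be continuous. Define θ(u) = ∫_0^t σ(u, τ)² dτ for u ∈ [a, b], and fix λ ≥ 0. For each N ≥ 1 let u_k^N = a + k(b − a)/N, and let X_{N,1}, …, X_{N,N} be independent random variables with X_{N,k} Gaussian distributed with mean 0 and variance θ(u_k^N). Then lim_{N→∞} E[exp(−(λ(b − a)/N) · ∑_{k=1}^N X_{N,k}²)] = exp(−λ · ∫_a^b (∫_0^t σ(u, τ)² dτ) du). -/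
/-!
By independence and the Gaussian identity `E[exp (-s X²)] = (1 + 2 s v)^(-1/2)` for
`X ~ N(0, v)`, the `N`-th expectation equals `∏ k, (1 + z N k)^(-1/2)` with
`z N k = 2λ (b - a)/N · θ(u_{k+1})`. Since `θ` is continuous on `[a, b]`, `z N k = O(1/N)`,
so `log (1 + z) = z + O(z²)` makes the logarithm of the product `-1/2` times a right-endpoint
Riemann sum of `2λθ`, up to an error `O(1/N)`.
-/

open MeasureTheory ProbabilityTheory Real Filter Set Topology
open scoped NNReal

lemma add_mul_div_mem_Icc {a b : ℝ} (hab : a ≤ b) {k N : ℕ} (hk : k ≤ N) :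
    a + k * (b - a) / N ∈ Icc a b := by
  have hkN : (k : ℝ) / N ≤ 1 := div_le_one_of_le₀ (by exact_mod_cast hk) N.cast_nonneg
  rw [mul_div_right_comm]
  exact ⟨le_add_of_nonneg_right (by have := sub_nonneg.2 hab; positivity),
    by linarith [mul_le_of_le_one_left (sub_nonneg.2 hab) hkN]⟩

lemma abs_sub_mul_sub_intervalIntegral_le {f : ℝ → ℝ} {x y ε : ℝ} (hxy : x ≤ y)
    (hf : IntervalIntegrable f volume x y) (hε : ∀ u ∈ Ioc x y, |f y - f u| ≤ ε) :
    |(y - x) * f y - ∫ u in x..y, f u| ≤ ε * (y - x) := by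
  have h : (y - x) * f y - ∫ u in x..y, f u = ∫ u in x..y, (f y - f u) := by
    rw [intervalIntegral.integral_sub intervalIntegrable_const hf,
      intervalIntegral.integral_const, smul_eq_mul]
  rw [h, ← abs_of_nonneg (sub_nonneg.2 hxy)]
  exact intervalIntegral.norm_integral_le_of_norm_le_const (f := fun u => f y - f u) fun u hu =>
    hε u (uIoc_of_le hxy ▸ hu)

lemma abs_riemannSum_sub_integral_le {f : ℝ → ℝ} {a b ε : ℝ} (hab : a ≤ b)
    (hf : ContinuousOn f (Icc a b)) {N : ℕ} (hN : N ≠ 0)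
    (hε : ∀ x ∈ Icc a b, ∀ y ∈ Icc a b, |x - y| ≤ (b - a) / N → |f x - f y| ≤ ε) :
    |(b - a) / N * ∑ k ∈ Finset.range N, f (a + (k + 1 : ℕ) * (b - a) / N)
        - ∫ u in a..b, f u| ≤ ε * (b - a) := by
  set x : ℕ → ℝ := fun k => a + k * (b - a) / N with hx
  have hstep : ∀ k, x (k + 1) - x k = (b - a) / N := fun k => by simp only [hx]; push_cast; ring
  have hmem : ∀ k < N, x k ∈ Icc a b ∧ x (k + 1) ∈ Icc a b := fun k hk =>
    ⟨add_mul_div_mem_Icc hab hk.le, add_mul_div_mem_Icc hab hk⟩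
  have hint : ∀ k < N, IntervalIntegrable f volume (x k) (x (k + 1)) := fun k hk =>
    (hf.intervalIntegrable_of_Icc hab).mono_set (uIcc_subset_uIcc (by
      rw [uIcc_of_le hab]; exact (hmem k hk).1) (by rw [uIcc_of_le hab]; exact (hmem k hk).2))
  have hends : x 0 = a ∧ x N = b := by
    simp only [hx]; constructor
    · simp
    · field_simp; ring
  rw [← hends.1, ← hends.2, ← intervalIntegral.sum_integral_adjacent_intervals hint,
    Finset.mul_sum, ← Finset.sum_sub_distrib, hends.1, hends.2]
  calc _ ≤ ∑ k ∈ Finset.range N, |(x (k + 1) - x k) * f (x (k + 1))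
          - ∫ u in x k..x (k + 1), f u| := by
        simp only [hstep]; exact Finset.abs_sum_le_sum_abs _ _
    _ ≤ ∑ k ∈ Finset.range N, ε * ((b - a) / N) := by
        refine Finset.sum_le_sum fun k hk => ?_
        have hk := Finset.mem_range.1 hk
        have hΔ : 0 ≤ (b - a) / N := by have := sub_nonneg.2 hab; positivity
        rw [← hstep k]
        refine abs_sub_mul_sub_intervalIntegral_le (by linarith [hstep k, hΔ]) (hint k hk)
          fun u hu => hε _ (hmem k hk).2 u ⟨by linarith [(hmem k hk).1.1, hu.1],
            by linarith [(hmem k hk).2.2, hu.2]⟩ ?_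
        rw [abs_of_nonneg (by linarith [hu.2])]
        linarith [hu.1, hstep k]
    _ = ε * (b - a) := by
        rw [Finset.sum_const, Finset.card_range, nsmul_eq_mul]; field_simp

theorem tendsto_riemannSum_right {f : ℝ → ℝ} {a b : ℝ} (hab : a ≤ b)
    (hf : ContinuousOn f (Icc a b)) :
    Tendsto (fun N : ℕ => (b - a) / N * ∑ k ∈ Finset.range N, f (a + (k + 1 : ℕ) * (b - a) / N))
      atTop (𝓝 (∫ u in a..b, f u)) := by
  rw [Metric.tendsto_atTop]
  intro ε hε
  have hε' : 0 < ε / (b - a + 1) := div_pos hε (by linarith)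
  obtain ⟨δ, hδ, hfδ⟩ := Metric.uniformContinuousOn_iff_le.1
    (isCompact_Icc.uniformContinuousOn_of_continuous hf) _ hε'
  obtain ⟨N₀, hN₀⟩ := exists_nat_gt ((b - a) / δ)
  refine ⟨N₀ + 1, fun N hN => ?_⟩
  have hN : (N₀ : ℝ) < N := by exact_mod_cast Nat.lt_of_succ_le hN
  have hmesh : (b - a) / N ≤ δ :=
    ((div_lt_comm₀ hδ (by linarith [N₀.cast_nonneg (α := ℝ)])).1 (hN₀.trans hN)).le
  rw [Real.dist_eq]
  calc _ ≤ ε / (b - a + 1) * (b - a) :=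
        abs_riemannSum_sub_integral_le hab hf (by omega)
          fun x hx y hy hxy => hfδ x hx y hy (hxy.trans hmesh)
    _ < ε := by
        rw [div_mul_eq_mul_div, div_lt_iff₀ (by linarith)]; nlinarith

lemma continuousOn_intervalIntegral_of_continuousOn {E : Type*} [NormedAddCommGroup E]
    [NormedSpace ℝ E] {f : ℝ → ℝ → E} {a b c d : ℝ} (hab : a ≤ b) (hcd : c ≤ d)
    (hf : ContinuousOn (Function.uncurry f) (Icc a b ×ˢ Icc c d)) :
    ContinuousOn (fun u => ∫ τ in c..d, f u τ) (Icc a b) := by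
  set g : ℝ → ℝ → E := fun u τ => f (projIcc a b hab u) (projIcc c d hcd τ)
  have hg : Continuous (Function.uncurry g) :=
    hf.comp_continuous
      (f := fun p : ℝ × ℝ => ((projIcc a b hab p.1 : ℝ), (projIcc c d hcd p.2 : ℝ)))
      (by fun_prop) fun p => ⟨(projIcc a b hab p.1).2, (projIcc c d hcd p.2).2⟩
  refine (intervalIntegral.continuous_parametric_intervalIntegral_of_continuous' hg c d
    ).continuousOn.congr fun u hu => intervalIntegral.integral_congr fun τ hτ => ?_
  rw [uIcc_of_le hcd] at hτ
  simp [g, projIcc_of_mem hab hu, projIcc_of_mem hcd hτ]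

lemma integral_exp_neg_mul_sq_gaussianReal (v : ℝ≥0) (s : ℝ) :
    ∫ x, exp (-(s * x ^ 2)) ∂gaussianReal 0 v = (√(1 + 2 * s * v))⁻¹ := by
  rcases eq_or_ne v 0 with rfl | hv
  · simp [gaussianReal_zero_var]
  have hv0 : (0 : ℝ) < v := by positivity
  have hdensity : ∀ x : ℝ, gaussianPDFReal 0 v x • exp (-(s * x ^ 2))
      = (√(2 * π * v))⁻¹ * exp (-(s + (2 * (v : ℝ))⁻¹) * x ^ 2) := fun x => by
    rw [gaussianPDFReal, smul_eq_mul, mul_assoc, ← exp_add]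
    congr 2
    ring
  have hratio : π / (s + (2 * (v : ℝ))⁻¹) = (1 + 2 * s * v)⁻¹ * (2 * π * v) := by
    rw [show 1 + 2 * s * v = 2 * v * (s + (2 * (v : ℝ))⁻¹) by field_simp; ring]
    field_simp
  rw [integral_gaussianReal_eq_integral_smul hv]
  simp_rw [hdensity]
  rw [integral_const_mul, integral_gaussian, hratio,
    sqrt_mul' _ (by positivity : (0 : ℝ) ≤ 2 * π * v), sqrt_inv]
  field_simp

lemma integral_exp_neg_mul_sum_sq_of_iIndepFun {Ω ι : Type*} [MeasurableSpace Ω]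
    {P : Measure Ω} [Fintype ι] {X : ι → Ω → ℝ} {v : ι → ℝ≥0} (hindep : iIndepFun X P)
    (hlaw : ∀ i, P.map (X i) = gaussianReal 0 (v i)) (s : ℝ) :
    ∫ ω, exp (-(s * ∑ i, X i ω ^ 2)) ∂P = ∏ i, (√(1 + 2 * s * v i))⁻¹ := by
  have hX : ∀ i, AEMeasurable (X i) P := fun i =>
    AEMeasurable.of_map_ne_zero (by rw [hlaw]; exact IsProbabilityMeasure.ne_zero _)
  have hmgf := (hindep.comp₀ (fun _ x => x ^ 2) hX fun _ => by fun_prop).mgf_sum₀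
    (fun i => (hX i).pow_const 2) Finset.univ (t := -s)
  simp only [mgf, Finset.sum_apply, Function.comp_apply, neg_mul] at hmgf
  rw [hmgf]
  refine Finset.prod_congr rfl fun i _ => ?_
  rw [← integral_exp_neg_mul_sq_gaussianReal, ← hlaw,
    integral_map (hX i) (by fun_prop)]

lemma abs_log_one_add_sub_self_le {z : ℝ} (hz : |z| ≤ 1 / 2) :
    |log (1 + z) - z| ≤ 2 * z ^ 2 := by
  have h := abs_log_sub_add_sum_range_le (x := -z) (by rw [abs_neg]; linarith) 1
  simp only [Finset.range_one, Finset.sum_singleton, zero_add, pow_one, Nat.cast_zero, div_one,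
    sub_neg_eq_add, abs_neg] at h
  rw [neg_add_eq_sub, one_add_one_eq_two] at h
  rw [← sq_abs z]
  refine h.trans ((div_le_iff₀ (by linarith)).2 ?_)
  nlinarith [abs_nonneg z, sq_nonneg |z|]

lemma tendsto_sum_log_one_add_of_abs_le_div {z : ℕ → ℕ → ℝ} {C L : ℝ}
    (hz : ∀ N, ∀ k < N, |z N k| ≤ C / N)
    (hsum : Tendsto (fun N => ∑ k ∈ Finset.range N, z N k) atTop (𝓝 L)) :
    Tendsto (fun N => ∑ k ∈ Finset.range N, log (1 + z N k)) atTop (𝓝 L) := by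
  have hsmall : ∀ᶠ N : ℕ in atTop, C / N ≤ 1 / 2 :=
    (tendsto_const_div_atTop_nhds_zero_nat C).eventually (ge_mem_nhds (by norm_num))
  have herr :
      Tendsto (fun N => ∑ k ∈ Finset.range N, (log (1 + z N k) - z N k)) atTop (𝓝 0) := by
    refine squeeze_zero_norm' ?_ (tendsto_const_div_atTop_nhds_zero_nat (2 * C ^ 2))
    filter_upwards [hsmall] with N hN
    calc _ ≤ ∑ k ∈ Finset.range N, |log (1 + z N k) - z N k| := Finset.abs_sum_le_sum_abs _ _
      _ ≤ ∑ k ∈ Finset.range N, 2 * (C / N) ^ 2 := Finset.sum_le_sum fun k hk => by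
          have hzk := hz N k (Finset.mem_range.1 hk)
          calc _ ≤ 2 * z N k ^ 2 := abs_log_one_add_sub_self_le (hzk.trans hN)
            _ ≤ 2 * (C / N) ^ 2 := by rw [← sq_abs (z N k)]; gcongr
      _ = 2 * C ^ 2 / N := by
          rcases eq_or_ne N 0 with rfl | hN0
          · simp
          · rw [Finset.sum_const, Finset.card_range, nsmul_eq_mul]; field_simp
  simpa using herr.add hsum

lemma tendsto_prod_inv_sqrt_one_add_of_abs_le_div {z : ℕ → ℕ → ℝ} {C L : ℝ}
    (hz : ∀ N, ∀ k < N, |z N k| ≤ C / N)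
    (hsum : Tendsto (fun N => ∑ k ∈ Finset.range N, z N k) atTop (𝓝 L)) :
    Tendsto (fun N => ∏ k ∈ Finset.range N, (√(1 + z N k))⁻¹) atTop (𝓝 (exp (-(L / 2)))) := by
  refine ((tendsto_sum_log_one_add_of_abs_le_div hz hsum).div_const 2).neg.rexp.congr' ?_
  filter_upwards [(tendsto_const_div_atTop_nhds_zero_nat C).eventually (gt_mem_nhds one_pos)]
    with N hN
  rw [Finset.sum_div, ← Finset.sum_neg_distrib, exp_sum]
  refine Finset.prod_congr rfl fun k hk => ?_
  have hpos : 0 < 1 + z N k := by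
    linarith [neg_abs_le (z N k), (hz N k (Finset.mem_range.1 hk)).trans_lt hN]
  rw [exp_neg, ← log_sqrt hpos.le, exp_log (sqrt_pos.2 hpos)]

lemma tendsto_prod_inv_sqrt_one_add_riemannSum {f : ℝ → ℝ} {a b : ℝ} (hab : a ≤ b)
    (hf : ContinuousOn f (Icc a b)) (c : ℝ) :
    Tendsto (fun N : ℕ => ∏ k ∈ Finset.range N,
        (√(1 + c * ((b - a) / N) * f (a + (k + 1 : ℕ) * (b - a) / N)))⁻¹)
      atTop (𝓝 (exp (-(c * (∫ u in a..b, f u) / 2)))) := by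
  obtain ⟨M, hM⟩ := isCompact_Icc.exists_bound_of_continuousOn hf
  refine tendsto_prod_inv_sqrt_one_add_of_abs_le_div (C := |c| * (b - a) * M) (fun N k hk => ?_)
    (((tendsto_riemannSum_right hab hf).const_mul c).congr fun N => ?_)
  · have hfM : |f (a + (k + 1 : ℕ) * (b - a) / N)| ≤ M := hM _ (add_mul_div_mem_Icc hab hk)
    have hba := sub_nonneg.2 hab
    calc _ = |c| * ((b - a) / N) * |f (a + (k + 1 : ℕ) * (b - a) / N)| := by
          rw [abs_mul, abs_mul, abs_div, Nat.abs_cast, abs_of_nonneg hba]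
      _ ≤ |c| * ((b - a) / N) * M := by gcongr
      _ = |c| * (b - a) * M / N := by ring
  · rw [Finset.mul_sum, Finset.mul_sum]
    exact Finset.sum_congr rfl fun k _ => by ring

theorem tendsto_exp_neg_discretized_eta_sq_general
    {Ω : Type*} [MeasurableSpace Ω] (P : Measure Ω)
    (a b T t lam : ℝ) (hab : a < b) (ht : t ∈ Set.Icc 0 T)
    (σ : ℝ → ℝ → ℝ)
    (hσ : ContinuousOn (fun p : ℝ × ℝ => σ p.1 p.2) (Set.Icc a b ×ˢ Set.Icc 0 T))
    (X : ℕ → ℕ → Ω → ℝ)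
    (hindep : ∀ N : ℕ, iIndepFun (fun k : Fin N => X N k) P)
    (hlaw : ∀ N : ℕ, ∀ k < N, P.map (X N k)
        = gaussianReal 0
            (∫ τ in (0:ℝ)..t, (σ (a + (k + 1 : ℕ) * (b - a) / N) τ) ^ 2).toNNReal) :
    Filter.Tendsto (fun N : ℕ =>
        ∫ ω, Real.exp (-(lam * (b - a) / N * ∑ k ∈ Finset.range N, (X N k ω) ^ 2)) ∂P)
      Filter.atTop
      (nhds (Real.exp (-(lam * ∫ u in a..b, ∫ τ in (0:ℝ)..t, (σ u τ) ^ 2)))) := by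
  set θ : ℝ → ℝ := fun u => ∫ τ in (0:ℝ)..t, σ u τ ^ 2
  have hθ_cont : ContinuousOn θ (Icc a b) :=
    continuousOn_intervalIntegral_of_continuousOn hab.le ht.1
      ((hσ.mono (prod_mono subset_rfl (Icc_subset_Icc_right ht.2))).pow 2)
  have hmoment : ∀ N : ℕ,
      ∫ ω, exp (-(lam * (b - a) / N * ∑ k ∈ Finset.range N, X N k ω ^ 2)) ∂P
        = ∏ k ∈ Finset.range N,
            (√(1 + 2 * lam * ((b - a) / N) * θ (a + (k + 1 : ℕ) * (b - a) / N)))⁻¹ := fun N => by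
    have hθ_nonneg : ∀ u, 0 ≤ θ u := fun u =>
      intervalIntegral.integral_nonneg ht.1 fun τ _ => sq_nonneg _
    simp only [Finset.sum_range, Finset.prod_range, integral_exp_neg_mul_sum_sq_of_iIndepFun
      (hindep N) (fun k => hlaw N k k.2)]
    refine Finset.prod_congr rfl fun k _ => ?_
    rw [Real.coe_toNNReal _ (hθ_nonneg _)]
    ring_nf
  simp_rw [hmoment]
  convert tendsto_prod_inv_sqrt_one_add_riemannSum hab.le hθ_cont (2 * lam) using 3
  ring

/-- **Lemma 2 of the paper.**  With `θ(u) = ∫_0^t σ(u, τ)² dτ` and, for each `N`,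
independent centered Gaussians `X_{N,1}, …, X_{N,N}` with variances `θ(u_k^N)`
at the uniform partition points `u_k^N = a + k(b-a)/N`, one has
`E[exp (-(λ(b-a)/N) ∑_k X_{N,k}²)] → exp (-λ ∫_a^b (∫_0^t σ(u,τ)² dτ) du)`. -/
theorem tendsto_exp_neg_discretized_eta_sq
    {Ω : Type*} [MeasurableSpace Ω] (P : Measure Ω) [IsProbabilityMeasure P]
    (a b T t lam : ℝ) (hab : a < b) (hT : 0 < T) (ht : t ∈ Set.Icc 0 T) (hlam : 0 ≤ lam)
    (σ : ℝ → ℝ → ℝ)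
    (hσ : ContinuousOn (fun p : ℝ × ℝ => σ p.1 p.2) (Set.Icc a b ×ˢ Set.Icc 0 T))
    (X : ℕ → ℕ → Ω → ℝ) (hmeas : ∀ N k, Measurable (X N k))
    (hindep : ∀ N : ℕ, iIndepFun (fun k : Fin N => X N k) P)
    (hlaw : ∀ N : ℕ, ∀ k < N, P.map (X N k)
        = gaussianReal 0
            (∫ τ in (0:ℝ)..t, (σ (a + (k + 1 : ℕ) * (b - a) / N) τ) ^ 2).toNNReal) :
    Filter.Tendsto (fun N : ℕ =>
        ∫ ω, Real.exp (-(lam * (b - a) / N * ∑ k ∈ Finset.range N, (X N k ω) ^ 2)) ∂P)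
      Filter.atTop
      (nhds (Real.exp (-(lam * ∫ u in a..b, ∫ τ in (0:ℝ)..t, (σ u τ) ^ 2)))) :=
  tendsto_exp_neg_discretized_eta_sq_general P a b T t lam hab ht σ hσ X hindep hlaw
end

section
/- Let l > 0, let a : [0, l] → ℝ and F : [0, l] → ℝ be continuous with F(0) = 0, and let m ≥ 1 be an integer. Then (∫_0^l a(u)·exp(−i F(u)) du)^m = m! · ∫_{0 ≤ u_1 ≤ ⋯ ≤ u_m ≤ l} (∏_{j=1}^m a(u_j)) · exp(−i · ∑_{j=1}^m (m − j + 1)·(F(u_j) − F(u_{j−1}))) du_1 ⋯ du_m, where u_0 = 0, the integral on the right being taken over the ordered simplex {0 ≤ u_1 ≤ ⋯ ≤ u_m ≤ l}. -/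
/-! Expanding the `m`-th power gives the integral of the symmetric function `∏ i, f (u i)` over
the cube `[0, l]^m`. Almost every point of the cube has distinct coordinates, hence is sorted by
exactly one permutation; so up to a null set the cube is the disjoint union of the `m!` permuted
copies of the ordered simplex, all carrying the same integral. On the simplex, summation by parts
turns `∑ j, (m - j + 1) (F u_j - F u_{j-1})` into `∑ j, F u_j` since `F u_0 = F 0 = 0`, and the
phase factors recombine into `∏ j, exp (-i F u_j)`. -/

open MeasureTheory

/-- The `j`-th point of an ordered `m`-tuple `u`, in `1`-based indexing, with the
convention `u_0 = 0` (and value `0` outside `1 ≤ j ≤ m`). -/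
noncomputable def chainPt (m : ℕ) (u : Fin m → ℝ) (j : ℕ) : ℝ :=
  if h : 1 ≤ j ∧ j ≤ m then u ⟨j - 1, by omega⟩ else 0

open Finset Function

theorem Finset.sum_Icc_one_sub_pred {M : Type*} [AddCommGroup M] (s : ℕ → M) :
    ∀ n : ℕ, ∑ j ∈ Icc 1 n, (s j - s (j - 1)) = s n - s 0
  | 0 => by simp
  | n + 1 => by
    rw [sum_Icc_succ_top (by omega), sum_Icc_one_sub_pred s n, Nat.add_sub_cancel]
    abel

theorem Finset.sum_Icc_one_nsmul_sub_pred {M : Type*} [AddCommGroup M] (s : ℕ → M) (m : ℕ) :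
    ∑ j ∈ Icc 1 m, (m - j + 1) • (s j - s (j - 1)) = ∑ j ∈ Icc 1 m, s j - m • s 0 := by
  induction m with
  | zero => simp
  | succ n ih =>
    have hcoeff : ∀ j ∈ Icc 1 n, (n + 1 - j + 1) • (s j - s (j - 1))
        = (n - j + 1) • (s j - s (j - 1)) + (s j - s (j - 1)) := by
      intro j hj
      rw [show n + 1 - j + 1 = (n - j + 1) + 1 by grind, succ_nsmul]
    rw [sum_Icc_succ_top (by omega), sum_Icc_succ_top (by omega), sum_congr rfl hcoeff,
      sum_add_distrib, ih, sum_Icc_one_sub_pred, Nat.add_sub_cancel, Nat.sub_self, zero_add,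
      one_nsmul, succ_nsmul]
    abel

theorem chainPt_zero (m : ℕ) (u : Fin m → ℝ) : chainPt m u 0 = 0 := by
  simp [chainPt]

theorem sum_Icc_one_chainPt {M : Type*} [AddCommMonoid M] (m : ℕ) (u : Fin m → ℝ)
    (g : ℝ → M) : ∑ j ∈ Icc 1 m, g (chainPt m u j) = ∑ i, g (u i) := by
  rw [← Ico_add_one_right_eq_Icc, ← sum_Ico_add' (fun j => g (chainPt m u j)) 0 m 1,
    ← range_eq_Ico, ← Fin.sum_univ_eq_sum_range]
  refine sum_congr rfl fun i _ => ?_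
  simp [chainPt]

theorem monotone_comp_iff_eq_sort {α : Type*} [LinearOrder α] {m : ℕ} {u : Fin m → α}
    (hu : Injective u) (σ : Equiv.Perm (Fin m)) : Monotone (u ∘ σ) ↔ σ = Tuple.sort u := by
  rw [Tuple.eq_sort_iff]
  refine ⟨fun h => ⟨h, fun i j hij hu_eq => ?_⟩, And.left⟩
  exact absurd (σ.injective (hu hu_eq)) hij.ne

theorem measurableSet_setOf_monotone_comp {m : ℕ} (σ : Equiv.Perm (Fin m)) :
    MeasurableSet {u : Fin m → ℝ | Monotone (u ∘ σ)} :=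
  (isClosed_monotone.preimage (f := fun u : Fin m → ℝ => u ∘ σ)
    (continuous_pi fun i => continuous_apply (σ i))).measurableSet

theorem ae_injective_pi {ι : Type*} [Fintype ι] : ∀ᵐ u : ι → ℝ, Injective u := by
  simp only [injective_iff_pairwise_ne, Pairwise, ae_all_iff]
  intro i j hij
  let L : (ι → ℝ) →ₗ[ℝ] ℝ :=
    (LinearMap.proj i : (ι → ℝ) →ₗ[ℝ] ℝ) - LinearMap.proj j
  have hL : LinearMap.ker L ≠ ⊤ := by
    classical
    intro htop
    have h : L (Pi.single i 1) = 0 := LinearMap.mem_ker.1 (htop ▸ Submodule.mem_top)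
    simp [L, Pi.single_eq_of_ne (Ne.symm hij)] at h
  refine measure_mono_null (fun u hu => ?_) (Measure.addHaar_submodule volume _ hL)
  simpa [L, sub_eq_zero] using hu

section Symmetrization

variable {E : Type*} [NormedAddCommGroup E] [NormedSpace ℝ E] {m : ℕ}

theorem setIntegral_setOf_monotone_comp (P : (Fin m → ℝ) → E) (σ : Equiv.Perm (Fin m))
    (hP : ∀ u, P (u ∘ σ) = P u) :
    ∫ u in {u | Monotone (u ∘ σ)}, P u = ∫ u in {u | Monotone u}, P u := by
  let T : (Fin m → ℝ) ≃ᵐ (Fin m → ℝ) :=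
    MeasurableEquiv.arrowCongr' σ.symm (MeasurableEquiv.refl ℝ)
  have hT : ∀ u, T u = u ∘ σ := fun u => rfl
  have hT_mp : MeasurePreserving T :=
    volume_preserving_arrowCongr' _ _ (MeasurePreserving.id volume)
  rw [← hT_mp.setIntegral_preimage_emb T.measurableEmbedding P {u | Monotone u}]
  simp only [Set.preimage_ofPred_eq, hT, hP]

theorem integral_eq_factorial_nsmul_setIntegral_monotone (P : (Fin m → ℝ) → E)
    (hP : Integrable P) (hP_symm : ∀ σ : Equiv.Perm (Fin m), ∀ u, P (u ∘ σ) = P u) :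
    ∫ u, P u = m.factorial • ∫ u in {u | Monotone u}, P u := by
  have hpartition :
      ∀ᵐ u, P u = ∑ σ : Equiv.Perm (Fin m), {u | Monotone (u ∘ σ)}.indicator P u := by
    filter_upwards [ae_injective_pi] with u hu
    simp only [Set.indicator_apply, Set.mem_ofPred_eq, monotone_comp_iff_eq_sort hu,
      sum_ite_eq', mem_univ, if_true]
  calc ∫ u, P u
      = ∑ σ : Equiv.Perm (Fin m), ∫ u in {u | Monotone (u ∘ σ)}, P u := by
        rw [integral_congr_ae hpartition, integral_finsetSum _ fun σ _ =>
          hP.indicator (measurableSet_setOf_monotone_comp σ)]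
        exact sum_congr rfl fun σ _ => integral_indicator (measurableSet_setOf_monotone_comp σ)
    _ = m.factorial • ∫ u in {u | Monotone u}, P u := by
        simp only [setIntegral_setOf_monotone_comp P _ (hP_symm _), sum_const, card_univ,
          Fintype.card_perm, Fintype.card_fin]

end Symmetrization

variable {𝕜 : Type*} [RCLike 𝕜]

theorem integral_pow_eq_factorial_mul_setIntegral_monotone {f : ℝ → 𝕜} (hf : Integrable f)
    (m : ℕ) :
    (∫ x, f x) ^ m = m.factorial * ∫ u in {u : Fin m → ℝ | Monotone u}, ∏ i, f (u i) := by
  rw [← nsmul_eq_mul, ← integral_eq_factorial_nsmul_setIntegral_monotone _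
    (Integrable.fintype_prod fun _ => hf) fun σ u => Equiv.prod_comp σ (f ∘ u),
    integral_fintype_prod_volume_eq_pow, Fintype.card_fin]

theorem setIntegral_pow_eq_factorial_mul_setIntegral_monotone {s : Set ℝ}
    (hs : MeasurableSet s) {f : ℝ → 𝕜} (hf : IntegrableOn f s) (m : ℕ) :
    (∫ x in s, f x) ^ m = m.factorial *
      ∫ u in {u : Fin m → ℝ | Monotone u ∧ ∀ i, u i ∈ s}, ∏ i, f (u i) := by
  have hprod : ∀ u : Fin m → ℝ, ∏ i, s.indicator f (u i)
      = (Set.univ.pi fun _ => s).indicator (fun u => ∏ i, f (u i)) u := by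
    intro u
    by_cases hu : ∀ i, u i ∈ s
    · rw [Set.indicator_of_mem (Set.mem_univ_pi.2 hu)]
      exact prod_congr rfl fun i _ => Set.indicator_of_mem (hu i) f
    · obtain ⟨i, hi⟩ := not_forall.1 hu
      rw [Set.indicator_of_notMem (fun h => hu (Set.mem_univ_pi.1 h))]
      exact prod_eq_zero (mem_univ i) (Set.indicator_of_notMem hi f)
  rw [← integral_indicator hs,
    integral_pow_eq_factorial_mul_setIntegral_monotone ((integrable_indicator_iff hs).2 hf),
    funext hprod,
    setIntegral_indicator (MeasurableSet.univ_pi fun _ => hs)]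
  congr 3
  ext u
  simp only [Set.mem_inter_iff, Set.mem_univ_pi, Set.mem_ofPred_eq]

theorem pow_integral_exp_phase_eq_factorial_mul_simplex_integral_general
    (l : ℝ) (hl : 0 < l) (a F : ℝ → ℝ)
    (ha : ContinuousOn a (Set.Icc 0 l)) (hF : ContinuousOn F (Set.Icc 0 l))
    (hF0 : F 0 = 0) (m : ℕ) :
    (∫ u in (0:ℝ)..l, (a u : ℂ) * Complex.exp (-Complex.I * (F u : ℂ))) ^ m
      = (m.factorial : ℂ) *
        ∫ u in {u : Fin m → ℝ | Monotone u ∧ ∀ i, u i ∈ Set.Icc 0 l},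
          (∏ i, (a (u i) : ℂ)) *
            Complex.exp (-Complex.I *
              ((∑ j ∈ Finset.Icc 1 m, ((m - j + 1 : ℕ) : ℝ) *
                (F (chainPt m u j) - F (chainPt m u (j - 1)))) : ℝ)) := by
  have hphase : ∀ u : Fin m → ℝ, ∑ j ∈ Icc 1 m, ((m - j + 1 : ℕ) : ℝ) *
      (F (chainPt m u j) - F (chainPt m u (j - 1))) = ∑ i, F (u i) := fun u => by
    simp only [← nsmul_eq_mul]
    rw [sum_Icc_one_nsmul_sub_pred (fun j => F (chainPt m u j)), chainPt_zero, hF0, smul_zero,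
      sub_zero, sum_Icc_one_chainPt]
  have hint : IntegrableOn (fun u => (a u : ℂ) * Complex.exp (-Complex.I * (F u : ℂ)))
      (Set.Icc 0 l) :=
    ContinuousOn.integrableOn_Icc (by fun_prop)
  rw [intervalIntegral.integral_of_le hl.le, ← integral_Icc_eq_integral_Ioc,
    setIntegral_pow_eq_factorial_mul_setIntegral_monotone measurableSet_Icc hint]
  simp only [hphase, prod_mul_distrib, Complex.ofReal_sum, mul_sum, Complex.exp_sum]

/-- **The degree transformation (equation (7) of the paper), full form.**
For continuous `a, F : [0, l] → ℝ` with `F(0) = 0`,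
`(∫_0^l a(u) e^{-iF(u)} du)^m` equals `m!` times the integral over the ordered
simplex `{0 ≤ u_1 ≤ ⋯ ≤ u_m ≤ l}` of
`(∏_j a(u_j)) exp (-i ∑_{j=1}^m (m - j + 1)(F(u_j) - F(u_{j-1})))`, with `u_0 = 0`. -/
theorem pow_integral_exp_phase_eq_factorial_mul_simplex_integral
    (l : ℝ) (hl : 0 < l) (a F : ℝ → ℝ)
    (ha : ContinuousOn a (Set.Icc 0 l)) (hF : ContinuousOn F (Set.Icc 0 l))
    (hF0 : F 0 = 0) (m : ℕ) (hm : 1 ≤ m) :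
    (∫ u in (0:ℝ)..l, (a u : ℂ) * Complex.exp (-Complex.I * (F u : ℂ))) ^ m
      = (m.factorial : ℂ) *
        ∫ u in {u : Fin m → ℝ | Monotone u ∧ ∀ i, u i ∈ Set.Icc 0 l},
          (∏ i, (a (u i) : ℂ)) *
            Complex.exp (-Complex.I *
              ((∑ j ∈ Finset.Icc 1 m, ((m - j + 1 : ℕ) : ℝ) *
                (F (chainPt m u j) - F (chainPt m u (j - 1)))) : ℝ)) :=
  pow_integral_exp_phase_eq_factorial_mul_simplex_integral_general l hl a F ha hF hF0 m
end
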